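/- arXiv:2403.05928 — 13 statements merged into one kernel-verified Lean document; each statement's English description precedes it below -/
import Mathlib

section
/- Let F be a CNF formula over V, let X ⊆ V, let C ∈ F, and let x ∈ X be a variable occurring in some literal of C. Say two clauses D and D' are resolvable on a variable w iff w is the unique variable v such that D contains a literal (v, b) and D' contains the opposite literal (v, ¬b). Suppose C is blocked in F at x, i.e., no clause of F is resolvable with C on x. Then ∃X.(F∖{C}) ≡ ∃X.F. -/
/-- An assignment `p` satisfies a literal `(v, b)` iff `p v = b`. -/
def satLit {V : Type*} (p : V → Bool) (l : V × Bool) : Prop := p l.1 = l.2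

/-- `p` satisfies a clause iff it satisfies at least one of its literals. -/
def satClause {V : Type*} (p : V → Bool) (C : Finset (V × Bool)) : Prop :=
  ∃ l ∈ C, satLit p l

/-- `p` satisfies a CNF formula iff it satisfies every clause of it. -/
def satCnf {V : Type*} (p : V → Bool) (F : Finset (Finset (V × Bool))) : Prop :=
  ∀ C ∈ F, satClause p C

/-- `p'` agrees with `p` on `V ∖ X`. -/
def agreeOn {V : Type*} (X : Set V) (p p' : V → Bool) : Prop :=
  ∀ v ∉ X, p' v = p v

/-- Clauses `D` and `D'` are resolvable on `w` iff `w` is the unique variable `v` such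
that `D` contains a literal `(v, b)` and `D'` contains the opposite literal `(v, ¬b)`. -/
def Resolvable {V : Type*} (D D' : Finset (V × Bool)) (w : V) : Prop :=
  (∃ b, (w, b) ∈ D ∧ (w, !b) ∈ D') ∧
  ∀ v, (∃ b, (v, b) ∈ D ∧ (v, !b) ∈ D') → v = w

/-- A clause blocked in `F` at a quantified variable `x` is redundant in `∃X.F`. -/
theorem blocked_clause_redundant {V : Type*} [DecidableEq V]
    (F : Finset (Finset (V × Bool))) (X : Set V)
    (C : Finset (V × Bool)) (hC : C ∈ F)
    (x : V) (hxX : x ∈ X) (hxC : ∃ b, (x, b) ∈ C)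
    (hblocked : ∀ D ∈ F, ¬ Resolvable C D x) :
    ∀ p : V → Bool,
      (∃ p', agreeOn X p p' ∧ satCnf p' (F.erase C)) ↔
      (∃ p', agreeOn X p p' ∧ satCnf p' F) := by
  intro p
  constructor
  · rintro ⟨p', hag, hsat⟩
    obtain ⟨b, hbC⟩ := hxC
    by_cases hsc : satClause p' C
    · exact ⟨p', hag, fun D hD => by
        by_cases hDC : D = C
        · exact hDC ▸ hsc
        · exact hsat D (Finset.mem_erase.mpr ⟨hDC, hD⟩)⟩
    · -- flip x
      have hfalse : ∀ l ∈ C, p' l.1 = !l.2 := by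
        intro l hl
        have h : ¬ satLit p' l := fun h => hsc ⟨l, hl, h⟩
        simp [satLit] at h
        cases hl2 : l.2 <;> simp_all
      set p'' := Function.update p' x b with hp''
      refine ⟨p'', ?_, ?_⟩
      · intro v hv
        have hvx : v ≠ x := fun h => hv (h ▸ hxX)
        simp [hp'', Function.update_of_ne hvx, hag v hv]
      · intro D hD
        by_cases hDC : D = C
        · exact ⟨(x, b), hDC ▸ hbC, by simp [satLit, hp'']⟩
        · obtain ⟨l, hlD, hlsat⟩ := hsat D (Finset.mem_erase.mpr ⟨hDC, hD⟩)
          by_cases hlx : l.1 = x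
          · -- l = (x, !b) since p' x = !b and p' satisfies l
            have hpx : p' x = !b := hfalse (x, b) hbC
            have hl2 : l.2 = !b := by
              rw [← hlsat, hlx, hpx]
            have hxbD : (x, !b) ∈ D := by
              have : l = (x, !b) := Prod.ext hlx hl2
              exact this ▸ hlD
            have hnres := hblocked D hD
            rw [Resolvable] at hnres
            push_neg at hnres
            obtain ⟨v, ⟨b', hvC, hvD⟩, hvx⟩ := hnres ⟨b, hbC, hxbD⟩
            refine ⟨(v, !b'), hvD, ?_⟩
            have : p' v = !b' := hfalse (v, b') hvC
            simp [satLit, hp'', Function.update_of_ne hvx, this]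
          · exact ⟨l, hlD, by simpa [satLit, hp'', Function.update_of_ne hlx] using hlsat⟩
  · rintro ⟨p', hag, hsat⟩
    exact ⟨p', hag, fun D hD => hsat D (Finset.mem_of_mem_erase hD)⟩
end

section
/- Let X, Y, Z be pairwise disjoint subsets of V with X ∪ Y ∪ Z = V. Let A be a CNF formula all of whose literals are over variables in X ∪ Y, and B a CNF formula all of whose literals are over variables in Y ∪ Z. Assume A ∪ B is unsatisfiable. Let W = X ∪ Z and let A* be a formula all of whose literals are over variables in Y that is a solution to the PQE problem of taking A out of ∃W.(A ∪ B). Then: (a) A* ∪ B is unsatisfiable; and (b) if, in addition, A implies A*, then A* is an interpolant for (A, B), i.e., A implies A* and no assignment satisfies both A* and B. -/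
/-- `H` is a solution to the PQE problem of taking `G` out of `∃X.F`. -/
def PqeSolution {V : Type*} [DecidableEq V] (X : Set V)
    (F G H : Finset (Finset (V × Bool))) : Prop :=
  ∀ p : V → Bool,
    (∃ p', agreeOn X p p' ∧ satCnf p' F) ↔
    (satCnf p H ∧ ∃ p'', agreeOn X p p'' ∧ satCnf p'' (F \ G))

/-- Interpolation as a special case of PQE (unsatisfiable case): if `A ∪ B` is
unsatisfiable and `A*` solves the PQE problem of taking `A` out of `∃(X∪Z).(A ∪ B)`,
then `A* ∪ B` is unsatisfiable; moreover, if `A` implies `A*`, then `A*` is an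
interpolant for `(A, B)`. -/
theorem interpolation_as_pqe {V : Type*} [DecidableEq V]
    (X Y Z : Set V)
    (hXY : Disjoint X Y) (hXZ : Disjoint X Z) (hYZ : Disjoint Y Z)
    (hunion : X ∪ Y ∪ Z = Set.univ)
    (A B : Finset (Finset (V × Bool)))
    (hA : ∀ D ∈ A, ∀ l ∈ D, (l : V × Bool).1 ∈ X ∪ Y)
    (hB : ∀ D ∈ B, ∀ l ∈ D, (l : V × Bool).1 ∈ Y ∪ Z)
    (hunsat : ¬ ∃ p : V → Bool, satCnf p (A ∪ B))
    (Astar : Finset (Finset (V × Bool)))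
    (hAstar : ∀ D ∈ Astar, ∀ l ∈ D, (l : V × Bool).1 ∈ Y)
    (hsol : PqeSolution (X ∪ Z) (A ∪ B) A Astar) :
    (¬ ∃ p : V → Bool, satCnf p (Astar ∪ B)) ∧
    ((∀ p, satCnf p A → satCnf p Astar) →
      ((∀ p, satCnf p A → satCnf p Astar) ∧
       ¬ ∃ p : V → Bool, satCnf p Astar ∧ satCnf p B)) := by
  have key : ¬ ∃ p : V → Bool, satCnf p Astar ∧ satCnf p B := by
    rintro ⟨p, hpA, hpB⟩
    apply hunsat
    have := (hsol p).mpr ⟨hpA, p, fun v _ => rfl, fun C hC => hpB C ((Finset.mem_union.mp (Finset.mem_sdiff.mp hC).1).resolve_left (Finset.mem_sdiff.mp hC).2)⟩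
    obtain ⟨p', _, hp'⟩ := this
    exact ⟨p', hp'⟩
  constructor
  · rintro ⟨p, hp⟩
    exact key ⟨p, fun C hC => hp C (Finset.mem_union_left _ hC),
      fun C hC => hp C (Finset.mem_union_right _ hC)⟩
  · intro h; exact ⟨h, key⟩
end

section
/- Let X, Y, Z be pairwise disjoint subsets of V with X ∪ Y ∪ Z = V. Let A be a CNF formula all of whose literals are over variables in X ∪ Y, and B a CNF formula all of whose literals are over variables in Y ∪ Z (the formula A ∪ B may be satisfiable). Let W = X ∪ Z and let A* be a formula all of whose literals are over variables in Y that is a solution to the PQE problem of taking A out of ∃W.(A ∪ B), and assume A implies A*. Then for every assignment p : V → Bool: p satisfies A* ∪ B if and only if there exists an assignment p' agreeing with p on V∖X (i.e., differing from p only on variables of X) that satisfies A ∪ B. -/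
/-- Interpolation by PQE for possibly satisfiable `A ∪ B`: the satisfying assignments
of `A* ∪ B` are exactly the projections (modulo the variables of `X`) of the satisfying
assignments of `A ∪ B`. -/
theorem interpolation_satisfiable_case {V : Type*} [DecidableEq V]
    (X Y Z : Set V)
    (hXY : Disjoint X Y) (hXZ : Disjoint X Z) (hYZ : Disjoint Y Z)
    (hunion : X ∪ Y ∪ Z = Set.univ)
    (A B : Finset (Finset (V × Bool)))
    (hA : ∀ D ∈ A, ∀ l ∈ D, (l : V × Bool).1 ∈ X ∪ Y)
    (hB : ∀ D ∈ B, ∀ l ∈ D, (l : V × Bool).1 ∈ Y ∪ Z)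
    (Astar : Finset (Finset (V × Bool)))
    (hAstar : ∀ D ∈ Astar, ∀ l ∈ D, (l : V × Bool).1 ∈ Y)
    (hsol : PqeSolution (X ∪ Z) (A ∪ B) A Astar)
    (himp : ∀ p, satCnf p A → satCnf p Astar) :
    ∀ p : V → Bool,
      satCnf p (Astar ∪ B) ↔ ∃ p', agreeOn X p p' ∧ satCnf p' (A ∪ B) := by
  classical
  intro p
  constructor
  · intro hp
    have hpA : satCnf p Astar := fun C hC => hp C (Finset.mem_union_left _ hC)
    have hpB : satCnf p B := fun C hC => hp C (Finset.mem_union_right _ hC)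
    have hBsub : satCnf p ((A ∪ B) \ A) := by
      intro C hC
      rcases Finset.mem_sdiff.mp hC with ⟨hCu, hCnA⟩
      rcases Finset.mem_union.mp hCu with h | h
      · exact absurd h hCnA
      · exact hpB C h
    obtain ⟨p', hagree, hsat⟩ := (hsol p).mpr ⟨hpA, p, fun v _ => rfl, hBsub⟩
    refine ⟨fun v => if v ∈ X then p' v else p v, fun v hv => if_neg hv, ?_⟩
    intro C hC
    rcases Finset.mem_union.mp hC with h | h
    · obtain ⟨l, hl, hsatl⟩ := hsat C (Finset.mem_union_left _ h)
      refine ⟨l, hl, ?_⟩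
      have hmem := hA C h l hl
      by_cases hx : l.1 ∈ X
      · simpa [satLit, hx] using hsatl
      · have hy : l.1 ∈ Y := hmem.resolve_left hx
        have hpe : p' l.1 = p l.1 := hagree l.1 (by
          rintro (hw | hw)
          · exact hx hw
          · exact hYZ.ne_of_mem hy hw rfl)
        simp only [satLit, if_neg hx]
        exact hpe.symm.trans hsatl
    · obtain ⟨l, hl, hsatl⟩ := hpB C h
      refine ⟨l, hl, ?_⟩
      have hmem := hB C h l hl
      have hx : l.1 ∉ X := by
        rcases hmem with hy | hz
        · exact fun hx => hXY.ne_of_mem hx hy rfl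
        · exact fun hx => hXZ.ne_of_mem hx hz rfl
      simpa [satLit, hx] using hsatl
  · rintro ⟨p', hagree, hsat⟩
    have hAsat : satCnf p' A := fun C hC => hsat C (Finset.mem_union_left _ hC)
    have hBsat : satCnf p' B := fun C hC => hsat C (Finset.mem_union_right _ hC)
    have hAstarSat := himp p' hAsat
    intro C hC
    rcases Finset.mem_union.mp hC with h | h
    · obtain ⟨l, hl, hsatl⟩ := hAstarSat C h
      have hy := hAstar C h l hl
      have hpe : p' l.1 = p l.1 := hagree l.1 (fun hx => hXY.ne_of_mem hx hy rfl)
      exact ⟨l, hl, hpe.symm.trans hsatl⟩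
    · obtain ⟨l, hl, hsatl⟩ := hBsat C h
      have hmem := hB C h l hl
      have hx : l.1 ∉ X := by
        rcases hmem with hy | hz
        · exact fun hx => hXY.ne_of_mem hx hy rfl
        · exact fun hx => hXZ.ne_of_mem hx hz rfl
      exact ⟨l, hl, (hagree l.1 hx).symm.trans hsatl⟩
end

section
/- Let F be a CNF formula over V in which all variables are quantified (X = V). Let p : V → Bool be any assignment and let G be the set of clauses of F not satisfied by p. Let H : Prop be a constant such that (some assignment satisfies F) ↔ (H ∧ some assignment satisfies F∖G) (i.e., H is a solution to the PQE problem of taking G out of ∃V.F). Then F is satisfiable if and only if H holds. -/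
/-- SAT by PQE: with all variables quantified, let `G` be the set of clauses of `F`
not satisfied by an assignment `p`, and let `H` be a solution to the PQE problem of
taking `G` out of `∃V.F`.  Then `F` is satisfiable iff `H` holds. -/
theorem sat_by_pqe {V : Type*} [DecidableEq V]
    (F G : Finset (Finset (V × Bool))) (p : V → Bool)
    (hG : ∀ C, C ∈ G ↔ (C ∈ F ∧ ¬ satClause p C))
    (H : Prop)
    (hH : (∃ p' : V → Bool, satCnf p' F) ↔ (H ∧ ∃ p'' : V → Bool, satCnf p'' (F \ G))) :
    (∃ p' : V → Bool, satCnf p' F) ↔ H := by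
  have hp : satCnf p (F \ G) := by
    intro C hC
    rw [Finset.mem_sdiff, hG] at hC
    by_contra h
    exact hC.2 ⟨hC.1, h⟩
  rw [hH]
  exact ⟨fun h => h.1, fun h => ⟨h, p, hp⟩⟩
end

section
/- Let ι be a type of inputs and f, g : (ι → Bool) → Bool be two single-output Boolean functions, and assume neither f nor g is a constant function. Let H : Bool → Bool → Prop be such that for all w₁ w₂ : Bool: (∃ v : ι → Bool, f v = w₁ ∧ g v = w₂) ↔ (H w₁ w₂ ∧ (∃ v' : ι → Bool, f v' = w₁) ∧ (∃ v'' : ι → Bool, g v'' = w₂)). (This expresses that H is a solution to the PQE problem of taking the input-equality constraint Eq out of ∃Z.(Eq ∧ F), where F encodes the two circuits on separate inputs.) Then f and g are equivalent (∀ v, f v = g v) if and only if ∀ w₁ w₂, H w₁ w₂ → w₁ = w₂. -/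
/-- Equivalence checking by PQE: for non-constant single-output circuits `f, g`, if
`H` solves the PQE problem of taking the input-equality constraint out of
`∃Z.(Eq ∧ F)`, then `f` and `g` are equivalent iff `H` implies output equality. -/
theorem equivalence_checking_by_pqe {ι : Type*}
    (f g : (ι → Bool) → Bool)
    (hf : ¬ ∃ c : Bool, ∀ v, f v = c)
    (hg : ¬ ∃ c : Bool, ∀ v, g v = c)
    (H : Bool → Bool → Prop)
    (hH : ∀ w₁ w₂ : Bool,
      (∃ v : ι → Bool, f v = w₁ ∧ g v = w₂) ↔
      (H w₁ w₂ ∧ (∃ v' : ι → Bool, f v' = w₁) ∧ (∃ v'' : ι → Bool, g v'' = w₂))) :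
    (∀ v, f v = g v) ↔ (∀ w₁ w₂ : Bool, H w₁ w₂ → w₁ = w₂) := by
  push_neg at hf hg
  have hfs : ∀ b : Bool, ∃ v, f v = b := by
    intro b
    obtain ⟨v, hv⟩ := hf (!b)
    exact ⟨v, by revert hv; cases f v <;> cases b <;> simp⟩
  have hgs : ∀ b : Bool, ∃ v, g v = b := by
    intro b
    obtain ⟨v, hv⟩ := hg (!b)
    exact ⟨v, by revert hv; cases g v <;> cases b <;> simp⟩
  constructor
  · intro heq w₁ w₂ hw
    obtain ⟨v, hv1, hv2⟩ := (hH w₁ w₂).mpr ⟨hw, hfs w₁, hgs w₂⟩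
    rw [← hv1, ← hv2, heq]
  · intro himp v
    exact himp _ _ ((hH (f v) (g v)).mp ⟨v, rfl, rfl⟩).1
end

section
/- Let S be a type of states, T : S → S → Prop a transition relation with stuttering (∀ s, T s s), and I : S → Prop a set of initial states. For n : ℕ, say a state s is reachable in n transitions iff there exist states s₁, …, s_{n+1} with I s₁, T s_i s_{i+1} for i = 1, …, n, and s_{n+1} = s; say s is reachable iff it is reachable in n transitions for some n. Let k ≥ 1. Then the following are equivalent: (1) the reachability diameter is less than k, i.e., every reachable state is reachable in j transitions for some j ≤ k − 1; (2) for every state s, s is reachable in k transitions iff there exist states s₁, …, s_{k+1} with I s₁, I s₂, T s_i s_{i+1} for i = 1, …, k, and s_{k+1} = s (i.e., the extra initial-state constraint I₂ on the second time frame is redundant in ∃A_k.(I₁ ∧ I₂ ∧ T_{1,k})). -/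
/-- A state `s` is reachable in `n` transitions from the initial states `I` via the
transition relation `T`: there is a sequence `s₁, …, s_{n+1}` with `I s₁`,
`T sᵢ s_{i+1}` for `i = 1, …, n` and `s_{n+1} = s`. -/
def ReachIn {S : Type*} (T : S → S → Prop) (I : S → Prop) (n : ℕ) (s : S) : Prop :=
  ∃ f : ℕ → S, I (f 0) ∧ (∀ i < n, T (f i) (f (i + 1))) ∧ f n = s

/-- Finding the reachability diameter by PQE: for a stuttering circuit and `k ≥ 1`,
the reachability diameter is less than `k` iff the extra initial-state constraint on
the second time frame is redundant in `∃A_k.(I₁ ∧ I₂ ∧ T_{1,k})`. -/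
theorem diameter_lt_iff_init_redundant {S : Type*}
    (T : S → S → Prop) (I : S → Prop)
    (hstutter : ∀ s, T s s)
    (k : ℕ) (hk : 1 ≤ k) :
    (∀ s : S, (∃ n : ℕ, ReachIn T I n s) → ∃ j ≤ k - 1, ReachIn T I j s) ↔
    (∀ s : S, ReachIn T I k s ↔
      ∃ f : ℕ → S, I (f 0) ∧ I (f 1) ∧ (∀ i < k, T (f i) (f (i + 1))) ∧ f k = s) := by
  constructor
  · intro hdiam s
    constructor
    · intro hs
      obtain ⟨j, hj, f, hI, hT, hend⟩ := hdiam s ⟨k, hs⟩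
      refine ⟨fun i => if i = 0 then f 0 else f (min (i - 1) j), by simpa using hI,
        by simpa using hI, ?_, ?_⟩
      · intro i hi
        rcases Nat.eq_zero_or_pos i with h0 | h0
        · subst h0
          simp [hstutter]
        · have h1 : i ≠ 0 := h0.ne'
          have h2 : i + 1 ≠ 0 := by omega
          simp only [if_neg h1, if_neg h2]
          rcases lt_or_ge (i - 1) j with hlt | hle
          · rw [show min (i - 1) j = i - 1 by omega, show min (i + 1 - 1) j = i by omega]
            have := hT (i - 1) (by omega)
            rwa [show i - 1 + 1 = i by omega] at this
          · rw [show min (i - 1) j = j by omega, show min (i + 1 - 1) j = j by omega]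
            exact hstutter _
      · have hkne : k ≠ 0 := by omega
        simp only [if_neg hkne]
        rw [show min (k - 1) j = j by omega]
        exact hend
    · rintro ⟨f, hI0, _, hT, hend⟩
      exact ⟨f, hI0, hT, hend⟩
  · intro hred
    have key : ∀ n s, ReachIn T I n s → ∃ j ≤ k - 1, ReachIn T I j s := by
      intro n
      induction n using Nat.strong_induction_on with
      | _ n ih =>
        intro s hs
        by_cases hnk : n ≤ k - 1
        · exact ⟨n, hnk, hs⟩
        · have hnk' : k ≤ n := by omega
          obtain ⟨f, hI, hT, hend⟩ := hs
          have hk' : ReachIn T I k (f k) :=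
            ⟨f, hI, fun i hi => hT i (by omega), rfl⟩
          obtain ⟨g, hgI0, hgI1, hgT, hgend⟩ := (hred (f k)).1 hk'
          have hshort : ReachIn T I (n - 1) s := by
            refine ⟨fun i => if i < k then g (i + 1) else f (i + 1), ?_, ?_, ?_⟩
            · simpa [show (0:ℕ) < k by omega] using hgI1
            · intro i hi
              by_cases h1 : i + 1 < k
              · have h0 : i < k := by omega
                simp only [if_pos h0, if_pos h1]
                exact hgT (i + 1) h1
              · by_cases h0 : i < k
                · have hik : i + 1 = k := by omega
                  simp only [if_pos h0, if_neg (by omega : ¬ i + 1 < k)]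
                  rw [hik, hgend]
                  have := hT (i + 1) (by omega)
                  rwa [hik] at this
                · simp only [if_neg h0, if_neg (by omega : ¬ i + 1 < k)]
                  exact hT (i + 1) (by omega)
            · by_cases hlast : n - 1 < k
              · have hnk2 : n = k := by omega
                simp only [if_pos hlast]
                rw [show n - 1 + 1 = n by omega, hnk2, hgend, ← hnk2, hend]
              · simp only [if_neg hlast]
                rw [show n - 1 + 1 = n by omega, hend]
          exact ih (n - 1) (by omega) s hshort
    rintro s ⟨n, hn⟩
    exact key n s hn
end

section
/- Let F be a CNF formula over V all of whose clauses are non-tautological, and let C ∈ F. If some assignment satisfies F, then there exist a clause C' in the C-cluster of F and a literal l with l ∈ C' and l ∈ C (a literal of C' shared with C; when C' = C this is any literal of C), and an assignment p in the l-vicinity of C' such that p satisfies F. (In particular, the literal l is not redundant in C'.) -/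
/-- A clause is non-tautological: it contains no pair of opposite literals. -/
def NonTaut {V : Type*} (C : Finset (V × Bool)) : Prop :=
  ∀ v : V, ¬ ((v, true) ∈ C ∧ (v, false) ∈ C)

/-- `C'` belongs to the `C`-cluster of `F`: `C' ∈ F` and `C' = C` or `C'` shares a
literal with `C`. -/
def InCluster {V : Type*} (F : Finset (Finset (V × Bool)))
    (C C' : Finset (V × Bool)) : Prop :=
  C' ∈ F ∧ (C' = C ∨ ∃ m, m ∈ C' ∧ m ∈ C)

/-- `p` belongs to the `l`-vicinity of `C`: `p` satisfies `l` and falsifies every other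
literal of `C`. -/
def InVicinity {V : Type*} (C : Finset (V × Bool)) (l : V × Bool) (p : V → Bool) : Prop :=
  satLit p l ∧ ∀ m ∈ C, m ≠ l → ¬ satLit p m

/-- If `F` is satisfiable, then some clause `C'` of the `C`-cluster has a literal `l`
shared with `C` whose `l`-vicinity contains an assignment satisfying `F`. -/
theorem satisfiable_vicinity {V : Type*}
    (F : Finset (Finset (V × Bool)))
    (hnt : ∀ D ∈ F, NonTaut D)
    (C : Finset (V × Bool)) (hC : C ∈ F)
    (hsat : ∃ p : V → Bool, satCnf p F) :
    ∃ C' : Finset (V × Bool), InCluster F C C' ∧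
      ∃ l : V × Bool, l ∈ C' ∧ l ∈ C ∧
        ∃ p : V → Bool, InVicinity C' l p ∧ satCnf p F := by
  classical
  obtain ⟨p0, hp0⟩ := hsat
  suffices H : ∀ n (q : V → Bool), satCnf q F →
      (C.filter (fun m => q m.1 = m.2)).card ≤ n →
      ∃ C' : Finset (V × Bool), InCluster F C C' ∧
        ∃ l : V × Bool, l ∈ C' ∧ l ∈ C ∧
          ∃ p : V → Bool, InVicinity C' l p ∧ satCnf p F by
    exact H _ p0 hp0 le_rfl
  intro n
  induction n with
  | zero =>
    intro q hq hcard
    obtain ⟨l, hlC, hsl⟩ := hq C hC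
    have : l ∈ C.filter (fun m => q m.1 = m.2) := Finset.mem_filter.mpr ⟨hlC, hsl⟩
    have := Finset.card_pos.mpr ⟨l, this⟩
    omega
  | succ n ih =>
    intro q hq hcard
    obtain ⟨l, hlC, hsl⟩ := hq C hC
    have hsl' : q l.1 = l.2 := hsl
    set q' := Function.update q l.1 (!l.2) with hq'def
    by_cases hsat' : satCnf q' F
    · -- recurse: one fewer satisfied literal in C
      apply ih q' hsat'
      have hsub : C.filter (fun m => q' m.1 = m.2) ⊆
          (C.filter (fun m => q m.1 = m.2)).erase l := by
        intro m hm
        obtain ⟨hmC, hm2⟩ := Finset.mem_filter.mp hm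
        by_cases hv : m.1 = l.1
        · exfalso
          have : q' m.1 = !l.2 := by rw [hv, hq'def, Function.update_self]
          have hm2' : m.2 = !l.2 := by rw [← hm2, this]
          have hmeq : m = (l.1, !l.2) := Prod.ext hv hm2'
          have hl : l = (l.1, l.2) := rfl
          rcases Bool.eq_false_or_eq_true l.2 with h | h
          · exact hnt C hC l.1 ⟨by rw [h] at hl; rw [hl] at hlC; exact hlC,
              by rw [h] at hmeq; simpa [hmeq] using hmC⟩
          · exact hnt C hC l.1 ⟨by rw [h] at hmeq; simpa [hmeq] using hmC,
              by rw [h] at hl; rw [hl] at hlC; exact hlC⟩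
        · have : q' m.1 = q m.1 := Function.update_of_ne hv _ _
          refine Finset.mem_erase.mpr ⟨?_, Finset.mem_filter.mpr ⟨hmC, by rw [← this]; exact hm2⟩⟩
          rintro rfl
          exact hv rfl
      have h1 : l ∈ C.filter (fun m => q m.1 = m.2) := Finset.mem_filter.mpr ⟨hlC, hsl'⟩
      have := Finset.card_le_card hsub
      rw [Finset.card_erase_of_mem h1] at this
      omega
    · -- flipping breaks some clause D; then q is in the l-vicinity of D
      rw [satCnf] at hsat'
      push_neg at hsat'
      obtain ⟨D, hDF, hD⟩ := hsat'
      have hlD : l ∈ D := by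
        obtain ⟨m, hmD, hsm⟩ := hq D hDF
        have hsm' : q m.1 = m.2 := hsm
        by_cases hv : m.1 = l.1
        · have : m.2 = l.2 := by rw [← hsm', hv, hsl']
          have : m = l := Prod.ext hv this
          rwa [← this]
        · exfalso
          exact hD ⟨m, hmD, show q' m.1 = m.2 by
            simp only [hq'def]; rw [Function.update_of_ne hv]; exact hsm'⟩
      refine ⟨D, ⟨hDF, Or.inr ⟨l, hlD, hlC⟩⟩, l, hlD, hlC, q, ⟨hsl, ?_⟩, hq⟩
      intro m hmD hml hsm
      have hsm' : q m.1 = m.2 := hsm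
      by_cases hv : m.1 = l.1
      · exact hml (Prod.ext hv (by rw [← hsm', hv, hsl']))
      · exact hD ⟨m, hmD, show q' m.1 = m.2 by
          simp only [hq'def]; rw [Function.update_of_ne hv]; exact hsm'⟩
end

section
/- Let F be a CNF formula over V all of whose clauses are non-tautological, and let C ∈ F. Assume that for every clause C' in the C-cluster of F and for every literal l with l ∈ C' and l ∈ C (a literal of C' shared with C), no assignment in the l-vicinity of C' satisfies F (i.e., every such shared literal is redundant). Then F is unsatisfiable. -/
/-- If every literal shared with `C` of every clause of the `C`-cluster of `F` is
redundant (no assignment in its vicinity satisfies `F`), then `F` is unsatisfiable. -/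
theorem all_shared_literals_redundant_unsat {V : Type*}
    (F : Finset (Finset (V × Bool)))
    (hnt : ∀ D ∈ F, NonTaut D)
    (C : Finset (V × Bool)) (hC : C ∈ F)
    (hred : ∀ C' : Finset (V × Bool), InCluster F C C' →
      ∀ l : V × Bool, l ∈ C' → l ∈ C →
        ∀ p : V → Bool, InVicinity C' l p → ¬ satCnf p F) :
    ¬ ∃ p : V → Bool, satCnf p F := by
  classical
  rintro ⟨p, hp⟩
  -- strong induction on the number of literals of C satisfied by the assignment
  suffices h : ∀ k : ℕ, ∀ r : V → Bool, satCnf r F →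
      (C.filter (fun m => r m.1 = m.2)).card ≤ k → False by
    exact h _ p hp le_rfl
  intro k
  induction k with
  | zero =>
    intro r hr hcard
    obtain ⟨l, hlC, hl⟩ := hr C hC
    have : l ∈ C.filter (fun m => r m.1 = m.2) := Finset.mem_filter.2 ⟨hlC, hl⟩
    have := Finset.card_pos.2 ⟨l, this⟩
    omega
  | succ k ih =>
    intro r hr hcard
    obtain ⟨l, hlC, hl⟩ := hr C hC
    obtain ⟨v, b⟩ := l
    have hl' : r v = b := hl
    set r' : V → Bool := Function.update r v (!b) with hr'def
    have hr'v : r' v = !b := Function.update_self v (!b) r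
    have hr'ne : ∀ w : V, w ≠ v → r' w = r w := fun w hw =>
      Function.update_of_ne hw (!b) r
    -- opposite literal not in C
    have hopp : ((v, !b) : V × Bool) ∉ C := by
      intro hmem
      cases b with
      | false => exact hnt C hC v ⟨hmem, hlC⟩
      | true => exact hnt C hC v ⟨hlC, hmem⟩
    -- the filter for r' is contained in (filter for r).erase (v,b)
    have hsub : C.filter (fun m => r' m.1 = m.2) ⊆
        (C.filter (fun m => r m.1 = m.2)).erase (v, b) := by
      intro m hm
      obtain ⟨hmC, hm'⟩ := Finset.mem_filter.1 hm
      by_cases hv : m.1 = v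
      · exfalso
        have : m = (v, !b) := by
          obtain ⟨m1, m2⟩ := m
          simp only at hv
          subst hv
          have : r' m1 = m2 := hm'
          rw [hr'v] at this
          simp [← this]
        rw [this] at hmC
        exact hopp hmC
      · refine Finset.mem_erase.2 ⟨?_, Finset.mem_filter.2 ⟨hmC, ?_⟩⟩
        · intro h; rw [h] at hv; exact hv rfl
        · rw [← hr'ne m.1 hv]; exact hm'
    have hcard' : (C.filter (fun m => r' m.1 = m.2)).card ≤ k := by
      have h1 := Finset.card_le_card hsub
      have h2 : ((C.filter (fun m => r m.1 = m.2)).erase (v, b)).card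
          = (C.filter (fun m => r m.1 = m.2)).card - 1 :=
        Finset.card_erase_of_mem (Finset.mem_filter.2 ⟨hlC, hl⟩)
      have h3 : 1 ≤ (C.filter (fun m => r m.1 = m.2)).card :=
        Finset.card_pos.2 ⟨(v, b), Finset.mem_filter.2 ⟨hlC, hl⟩⟩
      omega
    by_cases hsat : satCnf r' F
    · exact ih r' hsat hcard'
    · -- some clause D is falsified by r'
      simp only [satCnf, not_forall] at hsat
      obtain ⟨D, hDF, hD⟩ := hsat
      -- r satisfies D; the satisfying literal must be (v,b)
      have hkey : ∀ m ∈ D, satLit r m → m = (v, b) := by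
        intro m hmD hm
        by_cases hv : m.1 = v
        · obtain ⟨m1, m2⟩ := m
          simp only at hv
          subst hv
          have hmb : m2 = b := (Eq.symm (hm : r m1 = m2)).trans hl'
          rw [hmb]
        · exfalso
          exact hD ⟨m, hmD, by rw [satLit, hr'ne m.1 hv]; exact hm⟩
      obtain ⟨m, hmD, hm⟩ := hr D hDF
      have hmeq := hkey m hmD hm
      subst hmeq
      -- D is in the cluster and r is in the (v,b)-vicinity of D
      have hclust : InCluster F C D := ⟨hDF, Or.inr ⟨(v, b), hmD, hlC⟩⟩
      have hvic : InVicinity D (v, b) r := by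
        refine ⟨hl, fun m' hm'D hm'ne hm' => hm'ne (hkey m' hm'D hm')⟩
      exact hred D hclust (v, b) hmD hlC r hvic hr
end

section
/- Let F be a CNF formula over V all of whose clauses are non-tautological, let C ∈ F, and let F_c denote the C-cluster of F. Let F'_c and F''_c be disjoint subsets of F_c with C ∈ F'_c and F_c = F'_c ∪ F''_c. Assume that for every clause C' ∈ F'_c and for every literal l with l ∈ C' and l ∈ C (a literal of C' shared with C), no assignment in the l-vicinity of C' satisfies F∖F''_c (equivalently, there is an l-certificate for C' implied by F∖F''_c). Then F∖F''_c is unsatisfiable, and hence F is unsatisfiable. -/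
/-- Optimization of the inductive reasoning: if the `C`-cluster `F'_c ∪ F''_c` splits
into disjoint parts with `C ∈ F'_c` and all literals of clauses of `F'_c` shared with
`C` are certified redundant with respect to `F ∖ F''_c`, then `F ∖ F''_c` (and hence
`F`) is unsatisfiable. -/
theorem cluster_split_unsat {V : Type*} [DecidableEq V]
    (F : Finset (Finset (V × Bool)))
    (hnt : ∀ D ∈ F, NonTaut D)
    (C : Finset (V × Bool)) (hC : C ∈ F)
    (F'c F''c : Finset (Finset (V × Bool)))
    (hdisj : Disjoint F'c F''c)
    (hCmem : C ∈ F'c)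
    (hcluster : ∀ C' : Finset (V × Bool),
      C' ∈ F'c ∪ F''c ↔ InCluster F C C')
    (hred : ∀ C' ∈ F'c, ∀ l : V × Bool, l ∈ C' → l ∈ C →
        ∀ p : V → Bool, InVicinity C' l p → ¬ satCnf p (F \ F''c)) :
    (¬ ∃ p : V → Bool, satCnf p (F \ F''c)) ∧ (¬ ∃ p : V → Bool, satCnf p F) := by
  classical
  have hCnF'' : C ∉ F''c := fun h => (Finset.disjoint_left.mp hdisj hCmem) h
  have hCF : C ∈ F \ F''c := Finset.mem_sdiff.mpr ⟨hC, hCnF''⟩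
  -- opposite literal not in a non-tautological clause
  have opp_not_mem : ∀ D : Finset (V × Bool), NonTaut D →
      ∀ l : V × Bool, l ∈ D → (l.1, !l.2) ∉ D := by
    rintro D hD ⟨v, b⟩ hl h
    cases b
    · exact hD v ⟨h, hl⟩
    · exact hD v ⟨hl, h⟩
  have key : ∀ n : ℕ, ∀ p : V → Bool, satCnf p (F \ F''c) →
      (C.filter (fun m => p m.1 = m.2)).card ≤ n → False := by
    intro n
    induction n with
    | zero =>
      intro p hp hcard
      obtain ⟨l, hl, hsl⟩ := hp C hCF
      have : l ∈ C.filter (fun m => p m.1 = m.2) := Finset.mem_filter.mpr ⟨hl, hsl⟩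
      have := Finset.card_pos.mpr ⟨l, this⟩
      omega
    | succ n ih =>
      intro p hp hcard
      obtain ⟨l, hl, hsl⟩ := hp C hCF
      have hlf : l ∈ C.filter (fun m => p m.1 = m.2) := Finset.mem_filter.mpr ⟨hl, hsl⟩
      -- flip the value of l's variable
      set p' : V → Bool := fun v => if v = l.1 then !l.2 else p v with hp'def
      have hp'l : p' l.1 = !l.2 := by simp [hp'def]
      have hp'other : ∀ v, v ≠ l.1 → p' v = p v := by
        intro v hv; simp [hp'def, hv]
      -- p' satisfies F \ F''c
      have hp' : satCnf p' (F \ F''c) := by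
        intro D hD
        obtain ⟨m, hm, hsm⟩ := hp D hD
        by_cases hm1 : m.1 = l.1
        · -- m = l (since p satisfies m and p l.1 = l.2)
          have hml : m = l := by
            have : p m.1 = m.2 := hsm
            rw [hm1, hsl] at this
            exact Prod.ext hm1 this.symm
          subst hml
          -- D contains l, so D is in the cluster
          have hDF : D ∈ F := (Finset.mem_sdiff.mp hD).1
          have hDcl : InCluster F C D := ⟨hDF, Or.inr ⟨m, hm, hl⟩⟩
          have hDun : D ∈ F'c ∪ F''c := (hcluster D).mpr hDcl
          have hDF' : D ∈ F'c := by
            rcases Finset.mem_union.mp hDun with h | h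
            · exact h
            · exact absurd h (Finset.mem_sdiff.mp hD).2
          by_contra hnone
          -- then p is in the m-vicinity of D
          have hvic : InVicinity D m p := by
            refine ⟨hsm, ?_⟩
            intro m' hm' hne hsm'
            apply hnone
            refine ⟨m', hm', ?_⟩
            have hm'1 : m'.1 ≠ m.1 := by
              intro hEq
              rcases Bool.eq_or_eq_not m'.2 m.2 with hb | hb
              · exact hne (Prod.ext hEq hb)
              · exact opp_not_mem D (hnt D hDF) m hm
                  (by rw [← hEq, ← hb] ; exact hm')
            show p' m'.1 = m'.2
            rw [hp'other m'.1 hm'1]; exact hsm'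
          exact hred D hDF' m hm hl p hvic hp
        · exact ⟨m, hm, by show p' m.1 = m.2; rw [hp'other m.1 hm1]; exact hsm⟩
      -- the satisfied-literal count drops by one
      have hfilt : C.filter (fun m => p' m.1 = m.2)
          = (C.filter (fun m => p m.1 = m.2)).erase l := by
        ext m
        simp only [Finset.mem_filter, Finset.mem_erase]
        constructor
        · rintro ⟨hm, hsm⟩
          have hm1 : m.1 ≠ l.1 := by
            intro hEq
            rcases Bool.eq_or_eq_not m.2 l.2 with hb | hb
            · have : m = l := Prod.ext hEq hb
              subst this
              rw [hp'l] at hsm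
              simp at hsm
            · exact opp_not_mem C (hnt C hC) l hl (by rw [← hEq, ← hb]; exact hm)
          refine ⟨fun h => hm1 (by rw [h]), hm, ?_⟩
          rw [← hp'other m.1 hm1]; exact hsm
        · rintro ⟨hne, hm, hsm⟩
          have hm1 : m.1 ≠ l.1 := by
            intro hEq
            rcases Bool.eq_or_eq_not m.2 l.2 with hb | hb
            · exact hne (Prod.ext hEq hb)
            · exact opp_not_mem C (hnt C hC) l hl (by rw [← hEq, ← hb]; exact hm)
          exact ⟨hm, by rw [hp'other m.1 hm1]; exact hsm⟩
      have hcard' : (C.filter (fun m => p' m.1 = m.2)).card ≤ n := by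
        rw [hfilt, Finset.card_erase_of_mem hlf]
        omega
      exact ih p' hp' hcard'
  have h1 : ¬ ∃ p : V → Bool, satCnf p (F \ F''c) := by
    rintro ⟨p, hp⟩
    exact key _ p hp le_rfl
  refine ⟨h1, ?_⟩
  rintro ⟨p, hp⟩
  exact h1 ⟨p, fun D hD => hp D (Finset.mem_sdiff.mp hD).1⟩
end

section
/- Let F be a CNF formula over V all of whose clauses are non-tautological, let C ∈ F, and let q be a partial assignment that satisfies no literal of C. Suppose that for every clause C' in the C-cluster of F that is not satisfied by q, and for every literal l with l ∈ C' and l ∈ C (shared with C) whose variable is not in dom(q), there exists a clause B such that F implies B and B is an l-certificate for C' in subspace q. Then no full assignment extending q satisfies F (i.e., F is unsatisfiable in the subspace q). -/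
/-- A partial assignment with domain `dom` and values `q` satisfies a literal `(v, b)`
iff `v ∈ dom` and `q v = b`. -/
def psatLit {V : Type*} (dom : Set V) (q : V → Bool) (m : V × Bool) : Prop :=
  m.1 ∈ dom ∧ q m.1 = m.2

/-- A partial assignment satisfies a clause iff it satisfies some literal of it. -/
def psatClause {V : Type*} (dom : Set V) (q : V → Bool) (C : Finset (V × Bool)) : Prop :=
  ∃ m ∈ C, psatLit dom q m

/-- Literal `m` is falsified by the extension `q⁺` of the partial assignment `(dom, q)`
that additionally assigns the variables of `C'` outside `dom`, satisfying `l` and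
falsifying the remaining literals of `C'` whose variables are outside `dom`. -/
def FalsifiedByExt {V : Type*} (dom : Set V) (q : V → Bool)
    (C' : Finset (V × Bool)) (l m : V × Bool) : Prop :=
  (m.1 ∈ dom ∧ q m.1 ≠ m.2) ∨
  (m.1 ∉ dom ∧ ((m.1 = l.1 ∧ m.2 ≠ l.2) ∨ (m.1 ≠ l.1 ∧ m ∈ C')))

/-- A clause `B` is an `l`-certificate for `C'` in subspace `(dom, q)`: every literal
of `B` is falsified by `q⁺`. -/
def Certificate {V : Type*} (dom : Set V) (q : V → Bool)
    (C' : Finset (V × Bool)) (l : V × Bool) (B : Finset (V × Bool)) : Prop :=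
  ∀ m ∈ B, FalsifiedByExt dom q C' l m

/-- If in subspace `q` every unassigned literal shared with `C` of every unsatisfied
cluster clause has a certificate implied by `F`, then `F` is unsatisfiable in
subspace `q`. -/
theorem cluster_certificates_unsat_in_subspace {V : Type*}
    (F : Finset (Finset (V × Bool)))
    (hnt : ∀ D ∈ F, NonTaut D)
    (C : Finset (V × Bool)) (hC : C ∈ F)
    (dom : Set V) (q : V → Bool)
    (hqC : ∀ m ∈ C, ¬ psatLit dom q m)
    (hcert : ∀ C' : Finset (V × Bool), InCluster F C C' →
      ¬ psatClause dom q C' →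
      ∀ l : V × Bool, l ∈ C' → l ∈ C → l.1 ∉ dom →
        ∃ B : Finset (V × Bool),
          (∀ p : V → Bool, satCnf p F → satClause p B) ∧
          Certificate dom q C' l B) :
    ∀ p : V → Bool, (∀ v ∈ dom, p v = q v) → ¬ satCnf p F := by
  classical
  intro p hpq hsat
  suffices h : ∀ n (p : V → Bool), (∀ v ∈ dom, p v = q v) → satCnf p F →
      (C.filter (fun m => m.1 ∉ dom ∧ p m.1 = m.2)).card ≤ n → False by
    exact h _ p hpq hsat le_rfl
  intro n
  induction n with
  | zero =>
    intro p hpq hsat hcard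
    obtain ⟨l, hlC, hl⟩ := hsat C hC
    by_cases hd : l.1 ∈ dom
    · exact hqC l hlC ⟨hd, by rw [← hpq l.1 hd]; exact hl⟩
    · have hmem : l ∈ C.filter (fun m => m.1 ∉ dom ∧ p m.1 = m.2) :=
        Finset.mem_filter.mpr ⟨hlC, hd, hl⟩
      have := Finset.card_pos.mpr ⟨l, hmem⟩
      omega
  | succ n ih =>
    intro p hpq hsat hcard
    by_cases h0 : (C.filter (fun m => m.1 ∉ dom ∧ p m.1 = m.2)).card ≤ n
    · exact ih p hpq hsat h0
    obtain ⟨l, hl⟩ := Finset.card_pos.mp (by omega :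
      0 < (C.filter (fun m => m.1 ∉ dom ∧ p m.1 = m.2)).card)
    obtain ⟨hlC, hld, hlp⟩ := Finset.mem_filter.mp hl
    set p₁ : V → Bool := Function.update p l.1 (!l.2) with hp₁
    have hp₁ne : ∀ v, v ≠ l.1 → p₁ v = p v := by
      intro v hv; simp [hp₁, Function.update_of_ne hv]
    have hp₁l : p₁ l.1 = !l.2 := by simp [hp₁]
    have hpq₁ : ∀ v ∈ dom, p₁ v = q v := by
      intro v hv
      have hvne : v ≠ l.1 := fun h => hld (h ▸ hv)
      rw [hp₁ne v hvne]; exact hpq v hv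
    -- the flipped assignment still satisfies F
    have hsat₁ : satCnf p₁ F := by
      intro D hD
      by_contra hnD
      obtain ⟨m', hm'D, hm'⟩ := hsat D hD
      have hm'1 : m'.1 = l.1 := by
        by_contra hne
        exact hnD ⟨m', hm'D, by rw [satLit, hp₁ne _ hne]; exact hm'⟩
      have hm'l : m' = l := by
        have : m'.2 = l.2 := by
          have := hm'; rw [satLit, hm'1, hlp] at this; exact this.symm
        exact Prod.ext hm'1 this
      subst hm'l
      have hclus : InCluster F C D := ⟨hD, Or.inr ⟨m', hm'D, hlC⟩⟩
      have hnq : ¬ psatClause dom q D := by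
        rintro ⟨m, hmD, hmdom, hmq⟩
        have hmne : m.1 ≠ m'.1 := fun h => hld (h ▸ hmdom)
        exact hnD ⟨m, hmD, by rw [satLit, hp₁ne _ hmne, hpq m.1 hmdom]; exact hmq⟩
      obtain ⟨B, hFB, hBcert⟩ := hcert D hclus hnq m' hm'D hlC hld
      obtain ⟨m, hmB, hm⟩ := hFB p hsat
      rcases hBcert m hmB with ⟨hmdom, hne⟩ | ⟨hmdom, ⟨heq, hne⟩ | ⟨hne, hmD⟩⟩
      · exact hne (by rw [← hpq m.1 hmdom]; exact hm)
      · exact hne (by rw [← hm, satLit] at *; rw [heq, hlp])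
      · exact hnD ⟨m, hmD, by rw [satLit, hp₁ne _ hne]; exact hm⟩
    -- the measure strictly decreases
    have hsub : (C.filter (fun m => m.1 ∉ dom ∧ p₁ m.1 = m.2)) ⊆
        (C.filter (fun m => m.1 ∉ dom ∧ p m.1 = m.2)).erase l := by
      intro m hm
      obtain ⟨hmC, hmd, hmp⟩ := Finset.mem_filter.mp hm
      have hne : m.1 ≠ l.1 := by
        intro h
        rw [h, hp₁l] at hmp
        have hml : m = (l.1, !l.2) := Prod.ext h hmp.symm
        have hll : l = (l.1, l.2) := rfl
        cases hb : l.2 with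
        | true => exact hnt C hC l.1 ⟨hb ▸ hll ▸ hlC, by
            rw [hml] at hmC; rw [hb] at hmC; simpa using hmC⟩
        | false => exact hnt C hC l.1 ⟨by
            rw [hml] at hmC; rw [hb] at hmC; simpa using hmC, hb ▸ hll ▸ hlC⟩
      refine Finset.mem_erase.mpr ⟨fun h => hne (by rw [h]), ?_⟩
      exact Finset.mem_filter.mpr ⟨hmC, hmd, by rw [← hp₁ne _ hne]; exact hmp⟩
    have hcard₁ : (C.filter (fun m => m.1 ∉ dom ∧ p₁ m.1 = m.2)).card ≤ n := by
      have h1 := Finset.card_le_card hsub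
      have h2 := Finset.card_erase_of_mem hl
      omega
    exact ih p₁ hpq₁ hsat₁ hcard₁
end

section
/- Let F be a CNF formula over V all of whose clauses are non-tautological, let C ∈ F, and let q be a partial assignment that satisfies no literal of C. Suppose that for every clause C' in the C-cluster of F that is not satisfied by q, and for every literal l with l ∈ C' and l ∈ C whose variable is not in dom(q), a clause B_{C',l} is given such that: F implies B_{C',l}; every literal of B_{C',l} is either a literal of C' different from l, or is falsified by q. (In particular each B_{C',l} is an l-certificate for C' in subspace q.) For each clause C' of the C-cluster that is satisfied by q, choose a literal m(C') of C' satisfied by q. Define the clause B_ind as the union of: (i) all literals of C falsified by q; (ii) the negations of the chosen literals m(C') over all cluster clauses C' satisfied by q; and (iii) for every pair (C', l) as above, all literals of B_{C',l} that are not literals of C'. Then every literal of B_ind is falsified by q (so q falsifies B_ind), and F implies B_ind. -/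
/-- Generation of an induction clause: given certificates `Bcert C' l` for the
unassigned shared literals of the unsatisfied cluster clauses and chosen satisfied
literals `mch C'` of the satisfied cluster clauses, the clause `Bind` built from
(i) the literals of `C` falsified by `q`, (ii) the negations of the chosen literals,
and (iii) the literals of the certificates not belonging to their clauses,
is falsified by `q` and implied by `F`. -/
theorem induction_clause_sound {V : Type*}
    (F : Finset (Finset (V × Bool)))
    (hnt : ∀ D ∈ F, NonTaut D)
    (C : Finset (V × Bool)) (hC : C ∈ F)
    (dom : Set V) (q : V → Bool)
    (hqC : ∀ m ∈ C, ¬ psatLit dom q m)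
    (Bcert : Finset (V × Bool) → (V × Bool) → Finset (V × Bool))
    (hBimp : ∀ C' : Finset (V × Bool), InCluster F C C' →
      ¬ psatClause dom q C' →
      ∀ l : V × Bool, l ∈ C' → l ∈ C → l.1 ∉ dom →
        ∀ p : V → Bool, satCnf p F → satClause p (Bcert C' l))
    (hBlits : ∀ C' : Finset (V × Bool), InCluster F C C' →
      ¬ psatClause dom q C' →
      ∀ l : V × Bool, l ∈ C' → l ∈ C → l.1 ∉ dom →
        ∀ m ∈ Bcert C' l, (m ∈ C' ∧ m ≠ l) ∨ (m.1 ∈ dom ∧ q m.1 ≠ m.2))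
    (mch : Finset (V × Bool) → V × Bool)
    (hmch : ∀ C' : Finset (V × Bool), InCluster F C C' → psatClause dom q C' →
      mch C' ∈ C' ∧ psatLit dom q (mch C'))
    (Bind : Finset (V × Bool))
    (hBind : ∀ m : V × Bool, m ∈ Bind ↔
      ((m ∈ C ∧ m.1 ∈ dom ∧ q m.1 ≠ m.2) ∨
       (∃ C' : Finset (V × Bool), InCluster F C C' ∧ psatClause dom q C' ∧
          m = ((mch C').1, !(mch C').2)) ∨
       (∃ (C' : Finset (V × Bool)) (l : V × Bool), InCluster F C C' ∧
          ¬ psatClause dom q C' ∧ l ∈ C' ∧ l ∈ C ∧ l.1 ∉ dom ∧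
          m ∈ Bcert C' l ∧ m ∉ C'))) :
    (∀ m ∈ Bind, (m : V × Bool).1 ∈ dom ∧ q m.1 ≠ m.2) ∧
    (∀ p : V → Bool, satCnf p F → satClause p Bind) := by
  classical
  have part1 : ∀ m ∈ Bind, (m : V × Bool).1 ∈ dom ∧ q m.1 ≠ m.2 := by
    intro m hm
    rw [hBind] at hm
    rcases hm with ⟨_, h⟩ | ⟨C', hcl, hsat, rfl⟩ |
      ⟨C', l, hcl, hnsat, hl', hlC, hldom, hmB, hmC'⟩
    · exact h
    · obtain ⟨_, hdomm, hqm⟩ := hmch C' hcl hsat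
      refine ⟨hdomm, ?_⟩
      simp only [hqm]
      simp
    · rcases hBlits C' hcl hnsat l hl' hlC hldom m hmB with ⟨hmem, _⟩ | h
      · exact absurd hmem hmC'
      · exact h
  refine ⟨part1, ?_⟩
  have main : ∀ n (p : V → Bool), (C.filter (fun m => p m.1 = m.2)).card = n →
      satCnf p F → ¬ satClause p Bind → False := by
    intro n
    induction n using Nat.strong_induction_on with
    | _ n ih =>
      intro p hcard hp hB
      obtain ⟨l, hlC, hlp⟩ := hp C hC
      have hlp : p l.1 = l.2 := hlp
      have hldom : l.1 ∉ dom := by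
        intro hd
        have hq : q l.1 ≠ l.2 := fun h => hqC l hlC ⟨hd, h⟩
        exact hB ⟨l, (hBind l).2 (Or.inl ⟨hlC, hd, hq⟩), hlp⟩
      set p' := Function.update p l.1 (!l.2) with hp'def
      have hother : ∀ m : V × Bool, m.1 ≠ l.1 → (satLit p' m ↔ satLit p m) := by
        intro m hm
        simp [satLit, hp'def, Function.update_of_ne hm]
      -- p' satisfies F
      have hp' : satCnf p' F := by
        intro D hD
        obtain ⟨m0, hm0D, hm0⟩ := hp D hD
        by_cases hv : m0.1 = l.1
        · have hm0l : m0 = l := by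
            have : m0.2 = l.2 := by rw [← hm0, ← hlp, hv]
            exact Prod.ext hv this
          subst hm0l
          have hcl : InCluster F C D := ⟨hD, Or.inr ⟨m0, hm0D, hlC⟩⟩
          by_cases hqs : psatClause dom q D
          · obtain ⟨hmem, hdomm, hqm⟩ := hmch D hcl hqs
            have hpmch : p (mch D).1 = (mch D).2 := by
              by_contra hne
              have hpm : p (mch D).1 = !(mch D).2 := Bool.eq_not_iff.mpr hne
              exact hB ⟨((mch D).1, !(mch D).2),
                (hBind _).2 (Or.inr (Or.inl ⟨D, hcl, hqs, rfl⟩)), hpm⟩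
            have hne : (mch D).1 ≠ m0.1 := fun h => hldom (h ▸ hdomm)
            exact ⟨mch D, hmem, (hother _ hne).2 hpmch⟩
          · obtain ⟨m, hmB, hm⟩ := hBimp D hcl hqs m0 hm0D hlC hldom p hp
            have hm : p m.1 = m.2 := hm
            have hmD : m ∈ D := by
              by_contra hmD
              exact hB ⟨m, (hBind m).2 (Or.inr (Or.inr
                ⟨D, m0, hcl, hqs, hm0D, hlC, hldom, hmB, hmD⟩)), hm⟩
            have hmne : m.1 ≠ m0.1 := by
              rcases hBlits D hcl hqs m0 hm0D hlC hldom m hmB with ⟨_, hne⟩ | ⟨hdm, _⟩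
              · intro h
                apply hne
                refine Prod.ext h ?_
                rw [← hm, h, hlp]  -- m.2 = p m.1 = p l.1 = l.2 = m0.2
              · exact fun h => hldom (h ▸ hdm)
            exact ⟨m, hmD, (hother _ hmne).2 hm⟩
        · exact ⟨m0, hm0D, (hother _ hv).2 hm0⟩
      -- p' falsifies Bind
      have hB' : ¬ satClause p' Bind := by
        rintro ⟨m, hmBind, hm⟩
        have hdm := (part1 m hmBind).1
        have hne : m.1 ≠ l.1 := fun h => hldom (h ▸ hdm)
        exact hB ⟨m, hmBind, (hother _ hne).1 hm⟩
      -- card decreases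
      have hsub : C.filter (fun m => p' m.1 = m.2) ⊆ C.filter (fun m => p m.1 = m.2) := by
        intro m hm
        simp only [Finset.mem_filter] at hm ⊢
        refine ⟨hm.1, ?_⟩
        by_cases hv : m.1 = l.1
        · exfalso
          have hm2 : m.2 = !l.2 := by
            rw [← hm.2, hv, hp'def]; simp
          have hmval : m = (l.1, !l.2) := Prod.ext hv hm2
          have := hnt C hC l.1
          apply this
          cases h2 : l.2
          · constructor
            · rw [hmval] at hm; simpa [h2] using hm.1
            · simpa [← h2] using hlC
          · constructor
            · simpa [← h2] using hlC
            · rw [hmval] at hm; simpa [h2] using hm.1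
        · rw [← hm.2, hp'def, Function.update_of_ne hv]
      have hlmem : l ∈ C.filter (fun m => p m.1 = m.2) := Finset.mem_filter.2 ⟨hlC, hlp⟩
      have hlnot : l ∉ C.filter (fun m => p' m.1 = m.2) := by
        simp [hp'def]
      have hlt : (C.filter (fun m => p' m.1 = m.2)).card < n := by
        rw [← hcard]
        exact Finset.card_lt_card (Finset.ssubset_iff_of_subset hsub |>.2 ⟨l, hlmem, hlnot⟩)
      exact ih _ hlt p' rfl hp' hB'
  intro p hp
  by_contra hcon
  exact main _ p rfl hp hcon
end

section
/- Let F be a CNF formula over V, let C ∈ F be a non-tautological clause, and let l ∈ C. Suppose there exists a clause B such that F implies B and every assignment in the l-vicinity of C falsifies B (B is an l-certificate for C). Then: (a) no assignment in the l-vicinity of C satisfies F; and (b) the literal l can be dropped from C, i.e., an assignment satisfies F if and only if it satisfies (F∖{C}) ∪ {C∖{l}}. -/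
/-- `p` falsifies a clause iff it falsifies all of its literals. -/
def falsClause {V : Type*} (p : V → Bool) (C : Finset (V × Bool)) : Prop :=
  ∀ l ∈ C, ¬ satLit p l

/-- If there is an `l`-certificate `B` for `C` (a clause implied by `F` and falsified
by every assignment of the `l`-vicinity of `C`), then the `l`-vicinity of `C` contains
no assignment satisfying `F`, and the literal `l` can be dropped from `C`. -/
theorem certificate_drops_literal {V : Type*} [DecidableEq V]
    (F : Finset (Finset (V × Bool)))
    (C : Finset (V × Bool)) (hC : C ∈ F) (hnt : NonTaut C)
    (l : V × Bool) (hl : l ∈ C)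
    (hcert : ∃ B : Finset (V × Bool),
      (∀ p : V → Bool, satCnf p F → satClause p B) ∧
      (∀ p : V → Bool, InVicinity C l p → falsClause p B)) :
    (∀ p : V → Bool, InVicinity C l p → ¬ satCnf p F) ∧
    (∀ p : V → Bool, satCnf p F ↔ satCnf p (insert (C.erase l) (F.erase C))) := by
  obtain ⟨B, hBimp, hBfals⟩ := hcert
  have ha : ∀ p : V → Bool, InVicinity C l p → ¬ satCnf p F := by
    intro p hp hsat
    obtain ⟨m, hmB, hm⟩ := hBimp p hsat
    exact hBfals p hp m hmB hm
  refine ⟨ha, fun p => ⟨fun hsat D hD => ?_, fun hsat D hD => ?_⟩⟩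
  · rcases Finset.mem_insert.mp hD with rfl | hD
    · obtain ⟨m, hmC, hm⟩ := hsat C hC
      by_cases hml : m = l
      · subst hml
        by_cases hother : ∃ m' ∈ C, m' ≠ m ∧ satLit p m'
        · obtain ⟨m', hm', hne, hs⟩ := hother
          exact ⟨m', Finset.mem_erase.mpr ⟨hne, hm'⟩, hs⟩
        · exact absurd hsat
            (ha p ⟨hm, fun m' hm' hne hs => hother ⟨m', hm', hne, hs⟩⟩)
      · exact ⟨m, Finset.mem_erase.mpr ⟨hml, hmC⟩, hm⟩
    · exact hsat D (Finset.mem_of_mem_erase hD)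
  · by_cases hDC : D = C
    · subst hDC
      obtain ⟨m, hmD, hm⟩ := hsat _ (Finset.mem_insert_self _ _)
      exact ⟨m, Finset.mem_of_mem_erase hmD, hm⟩
    · exact hsat D (Finset.mem_insert_of_mem (Finset.mem_erase.mpr ⟨hDC, hD⟩))
end

section
/- Let A, B, K be CNF formulas over V and let Z₁ ⊆ Z ⊆ V be sets of variables such that no variable occurring in a literal of K belongs to Z₁. If ∃Z₁.(A ∪ B) ≡ ∃Z₁.B (i.e., A is redundant in ∃Z₁.(A ∪ B)), then ∃Z.(A ∪ B ∪ K) ≡ ∃Z.(B ∪ K) (i.e., A is redundant in ∃Z.(A ∪ B ∪ K)). In the cut-propagation method, this shows that redundancy of the previous cut relation with respect to the quantified prefix of the circuit formula implies its redundancy with respect to the full quantified circuit formula. -/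
/-- If `A` is redundant in `∃Z₁.(A ∪ B)` and no variable of `K` belongs to `Z₁ ⊆ Z`,
then `A` is redundant in `∃Z.(A ∪ B ∪ K)`. -/
theorem redundancy_lifts_through_cut {V : Type*} [DecidableEq V]
    (A B K : Finset (Finset (V × Bool)))
    (Z₁ Z : Set V) (hZ₁Z : Z₁ ⊆ Z)
    (hK : ∀ D ∈ K, ∀ m ∈ D, (m : V × Bool).1 ∉ Z₁)
    (hred : ∀ p : V → Bool,
      (∃ p', agreeOn Z₁ p p' ∧ satCnf p' (A ∪ B)) ↔
      (∃ p'', agreeOn Z₁ p p'' ∧ satCnf p'' B)) :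
    ∀ p : V → Bool,
      (∃ p', agreeOn Z p p' ∧ satCnf p' (A ∪ B ∪ K)) ↔
      (∃ p'', agreeOn Z p p'' ∧ satCnf p'' (B ∪ K)) := by
  intro p
  constructor
  · rintro ⟨p', hag, hsat⟩
    exact ⟨p', hag, fun C hC => hsat C (by
      simp only [Finset.mem_union] at hC ⊢
      tauto)⟩
  · rintro ⟨p'', hag, hsat⟩
    have hB : satCnf p'' B := fun C hC => hsat C (Finset.mem_union_left _ hC)
    obtain ⟨q, hq, hqAB⟩ := (hred p'').mpr ⟨p'', fun v _ => rfl, hB⟩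
    refine ⟨q, ?_, ?_⟩
    · intro v hv
      rw [hq v (fun h => hv (hZ₁Z h)), hag v hv]
    · intro C hC
      simp only [Finset.mem_union] at hC
      rcases hC with (hC | hC) | hC
      · exact hqAB C (Finset.mem_union_left _ hC)
      · exact hqAB C (Finset.mem_union_right _ hC)
      · obtain ⟨l, hl, hsl⟩ := hsat C (Finset.mem_union_right _ hC)
        exact ⟨l, hl, by unfold satLit at hsl ⊢; rw [hq l.1 (hK C hC l hl), hsl]⟩
end
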